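/- arXiv:2309.10364 — 2 statements merged into one kernel-verified Lean document; each statement's English description precedes it below -/
import Mathlib

section
/- Suppose ρ, p : (0,∞) → ℝ satisfy, for every positive differentiable a(t), the equation d/dt[ρ(a(t))] + 3(a'/a)(p(a(t)) + ρ(a(t))) = 0 (equivalently, ρ'(a)·a = −3(ρ(a)+p(a))). Let α : ℝ → ℝ be differentiable and Φ(t) differentiable. Then ρ̃(a,Φ) = e^{4α(Φ)}·ρ(a·e^{α(Φ)}) and p̃(a,Φ) = e^{4α(Φ)}·p(a·e^{α(Φ)}) satisfy the non-conservation equation d/dt[ρ̃(a(t),Φ(t))] + 3(a'/a)(p̃ + ρ̃) = −α'(Φ)·Φ'(t)·(3p̃ − ρ̃) along any differentiable trajectories a(t) > 0, Φ(t). -/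
/-!
Along any trajectory `b(t) > 0` the conservation law `x ρ'(x) = -3(ρ + p)` gives
`d/dt ρ(b) = -3 (ḃ/b)(ρ + p)`. For the rescaled radius `b = a e^β` one has `ḃ/b = ȧ/a + β̇`,
so differentiating `e^{4β} ρ(b)` produces `-3 (ȧ/a)(P + R)` plus the excess
`β̇ (4R - 3(R + P)) = -β̇ (3P - R)`, which is the chameleon source term with `β = α ∘ Φ`.
-/

open Real

noncomputable def conformalRescale (f a β : ℝ → ℝ) (t : ℝ) : ℝ :=
  exp (4 * β t) * f (a t * exp (β t))

section ConservedFluid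

variable {ρ p : ℝ → ℝ}

theorem hasDerivAt_comp_of_conserved {b : ℝ → ℝ} {b' t : ℝ}
    (hρ : DifferentiableAt ℝ ρ (b t))
    (hcons : b t * deriv ρ (b t) = -3 * (ρ (b t) + p (b t)))
    (hb : HasDerivAt b b' t) (hbt : b t ≠ 0) :
    HasDerivAt (fun s => ρ (b s)) (-3 * (b' / b t) * (ρ (b t) + p (b t))) t := by
  have hρ' : deriv ρ (b t) = -3 * (ρ (b t) + p (b t)) / b t := by
    rw [eq_div_iff hbt, mul_comm, hcons]
  have h := hρ.hasDerivAt.comp t hb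
  rw [hρ'] at h
  exact h.congr_deriv (by field_simp)

theorem hasDerivAt_conformalRescale
    (hρ : ∀ x > (0:ℝ), DifferentiableAt ℝ ρ x)
    (hcons : ∀ x > (0:ℝ), x * deriv ρ x = -3 * (ρ x + p x))
    {a β : ℝ → ℝ} {a' β' t : ℝ} (ha : HasDerivAt a a' t) (hβ : HasDerivAt β β' t)
    (hat : 0 < a t) :
    HasDerivAt (conformalRescale ρ a β)
      (-3 * (a' / a t) * (conformalRescale p a β t + conformalRescale ρ a β t)
        - β' * (3 * conformalRescale p a β t - conformalRescale ρ a β t)) t := by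
  have hbt : 0 < a t * exp (β t) := mul_pos hat (exp_pos _)
  have hb : HasDerivAt (fun s => a s * exp (β s))
      ((a' / a t + β') * (a t * exp (β t))) t := by
    refine (ha.mul hβ.exp).congr_deriv ?_
    field_simp
  have hρb := hasDerivAt_comp_of_conserved (b := fun s => a s * exp (β s))
    (hρ _ hbt) (hcons _ hbt) hb hbt.ne'
  refine (((hβ.const_mul 4).exp).mul hρb).congr_deriv ?_
  unfold conformalRescale
  field_simp
  ring

end ConservedFluid

/-- conformally rescaled densities of a conserved fluid solve the
    chameleon non-conservation equation ρ̇ + 3H(p+ρ) = -α̇(3p-ρ). -/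
theorem stmt_2 (ρ p α : ℝ → ℝ)
    (hρdiff : ∀ x > (0:ℝ), DifferentiableAt ℝ ρ x)
    (hcons : ∀ x > (0:ℝ), x * deriv ρ x = -3 * (ρ x + p x))
    (hα : Differentiable ℝ α)
    (a Φ : ℝ → ℝ)
    (ha : Differentiable ℝ a) (hΦ : Differentiable ℝ Φ)
    (hapos : ∀ t, 0 < a t)
    (R P : ℝ → ℝ)
    (hR : ∀ t, R t = Real.exp (4 * α (Φ t)) * ρ (a t * Real.exp (α (Φ t))))
    (hP : ∀ t, P t = Real.exp (4 * α (Φ t)) * p (a t * Real.exp (α (Φ t)))) :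
    ∀ t, deriv R t + 3 * (deriv a t / a t) * (P t + R t)
      = -(deriv α (Φ t) * deriv Φ t) * (3 * P t - R t) := by
  intro t
  have hRdef : R = conformalRescale ρ a (α ∘ Φ) := funext hR
  have hPt : P t = conformalRescale p a (α ∘ Φ) t := hP t
  have hαΦ : HasDerivAt (α ∘ Φ) (deriv α (Φ t) * deriv Φ t) t :=
    (hα _).hasDerivAt.comp t (hΦ t).hasDerivAt
  rw [hRdef, (hasDerivAt_conformalRescale hρdiff hcons (ha t).hasDerivAt hαΦ (hapos t)).deriv,
    hPt]
  ring
end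

section
/- Fix n ≥ 1. Suppose ρ(a) = f(a^{-n}) and p(a) = g(a^{-n}) with g(x) = x f'(x) − f(x), so that ρ̇ + nH(p+ρ) = 0 along any trajectory a(t). Then ρ̃(a,Φ) = e^{(n+1)α(Φ)}ρ(a e^{α(Φ)}) and p̃(a,Φ) = e^{(n+1)α(Φ)}p(a e^{α(Φ)}) satisfy ρ̃̇ + nH(p̃+ρ̃) = −α̇(n·p̃ − ρ̃) along any differentiable a(t) > 0, Φ(t), where H = a'/a and α̇ = α'(Φ)Φ'. -/
/-!
For the equation of state `p = x f'(x) - f` in `x = b⁻ⁿ`, the density `ρ(b) = f(b⁻ⁿ)` obeys the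
conservation law `b ρ'(b) = -n (p + ρ)`. Along `b(t) = a(t) e^{α(Φ(t))}` one has `ḃ/b = H + α̇`, so
`d/dt ρ(b) = -n (H + α̇)(p + ρ)`, while the prefactor `e^{(n+1)α}` contributes `(n+1) α̇ ρ̃`.
The `α̇` terms combine to `(n+1) α̇ ρ̃ - n α̇ (p̃ + ρ̃) = -α̇ (n p̃ - ρ̃)`.
-/

open Real

/-- The paper's `ρ̃` (or `p̃`) along a trajectory, with `A = α ∘ Φ`. -/
noncomputable def chameleonRescale (n : ℝ) (A a ρ : ℝ → ℝ) (t : ℝ) : ℝ :=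
  exp ((n + 1) * A t) * ρ (a t * exp (A t))

theorem hasDerivAt_comp_inv_pow {f g : ℝ → ℝ} (n : ℕ) (hg : ∀ x, g x = x * deriv f x - f x)
    {b : ℝ} (hb : b ≠ 0) (hf : DifferentiableAt ℝ f ((b ^ n)⁻¹)) :
    HasDerivAt (fun y => f ((y ^ n)⁻¹))
      (-(n / b) * (g ((b ^ n)⁻¹) + f ((b ^ n)⁻¹))) b := by
  have hbn : b ^ n ≠ 0 := pow_ne_zero n hb
  refine (hf.hasDerivAt.comp b ((hasDerivAt_pow n b).inv hbn)).congr_deriv ?_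
  rw [hg]
  rcases n with _ | m
  · simp
  · rw [Nat.add_sub_cancel]
    field_simp
    ring

theorem hasDerivAt_chameleonRescale {ρ p a A : ℝ → ℝ} {a' A' t : ℝ} (n : ℝ)
    (hρ : HasDerivAt ρ (-(n / (a t * exp (A t))) * (p (a t * exp (A t)) + ρ (a t * exp (A t))))
      (a t * exp (A t)))
    (ha : HasDerivAt a a' t) (hA : HasDerivAt A A' t) (hat : a t ≠ 0) :
    HasDerivAt (chameleonRescale n A a ρ)
      (-(n * (a' / a t)) * (chameleonRescale n A a p t + chameleonRescale n A a ρ t)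
        - A' * (n * chameleonRescale n A a p t - chameleonRescale n A a ρ t)) t := by
  have hb := ha.mul hA.exp
  have hE := (hA.const_mul (n + 1)).exp
  refine (hE.mul (hρ.comp t hb)).congr_deriv ?_
  simp only [chameleonRescale, Function.comp_apply, Pi.mul_apply]
  field_simp
  ring

theorem stmt_3_general (n : ℕ)
    (f g α : ℝ → ℝ)
    (hf : Differentiable ℝ f) (hα : Differentiable ℝ α)
    (hg : ∀ x, g x = x * deriv f x - f x)
    (a Φ : ℝ → ℝ)
    (ha : Differentiable ℝ a) (hΦ : Differentiable ℝ Φ)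
    (hapos : ∀ t, 0 < a t)
    (R P : ℝ → ℝ)
    (hR : ∀ t, R t = Real.exp (((n : ℝ) + 1) * α (Φ t))
      * f (((a t * Real.exp (α (Φ t))) ^ n)⁻¹))
    (hP : ∀ t, P t = Real.exp (((n : ℝ) + 1) * α (Φ t))
      * g (((a t * Real.exp (α (Φ t))) ^ n)⁻¹)) :
    ∀ t, deriv R t + (n : ℝ) * (deriv a t / a t) * (P t + R t)
      = -(deriv α (Φ t) * deriv Φ t) * ((n : ℝ) * P t - R t) := by
  intro t
  have hR' : R = chameleonRescale n (fun s => α (Φ s)) a (fun y => f ((y ^ n)⁻¹)) := funext hR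
  have hP' : P = chameleonRescale n (fun s => α (Φ s)) a (fun y => g ((y ^ n)⁻¹)) := funext hP
  have hb : a t * exp (α (Φ t)) ≠ 0 := by have := hapos t; positivity
  have hρ := hasDerivAt_comp_inv_pow n hg hb (hf _)
  have hA : HasDerivAt (fun s => α (Φ s)) (deriv α (Φ t) * deriv Φ t) t :=
    (hα (Φ t)).hasDerivAt.comp t (hΦ t).hasDerivAt
  have hRd := hasDerivAt_chameleonRescale (p := fun y => g ((y ^ n)⁻¹)) (n : ℝ) hρ (ha t).hasDerivAt hA (hapos t).ne'
  rw [← hR', ← hP'] at hRd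
  rw [hRd.deriv]
  ring

/-- chameleon solution in (n+1)-dimensional FLRW:
    ρ̃̇ + nH(p̃+ρ̃) = -α̇(n p̃ - ρ̃). -/
theorem stmt_3 (n : ℕ) (hn : 1 ≤ n)
    (f g α : ℝ → ℝ)
    (hf : Differentiable ℝ f) (hα : Differentiable ℝ α)
    (hg : ∀ x, g x = x * deriv f x - f x)
    (a Φ : ℝ → ℝ)
    (ha : Differentiable ℝ a) (hΦ : Differentiable ℝ Φ)
    (hapos : ∀ t, 0 < a t)
    (R P : ℝ → ℝ)
    (hR : ∀ t, R t = Real.exp (((n : ℝ) + 1) * α (Φ t))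
      * f (((a t * Real.exp (α (Φ t))) ^ n)⁻¹))
    (hP : ∀ t, P t = Real.exp (((n : ℝ) + 1) * α (Φ t))
      * g (((a t * Real.exp (α (Φ t))) ^ n)⁻¹)) :
    ∀ t, deriv R t + (n : ℝ) * (deriv a t / a t) * (P t + R t)
      = -(deriv α (Φ t) * deriv Φ t) * ((n : ℝ) * P t - R t) :=
  stmt_3_general n f g α hf hα hg a Φ ha hΦ hapos R P hR hP
end
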